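/- Fix Δ > 0 and an exploration cost c > 0. Then there exists a unique σ̄ > 0 such that V(σ̄, Δ) = c, and for every σ > 0 one has V(σ, Δ) > c if and only if σ > σ̄. Hence the optimal exploration policy is a threshold rule in status-quo uncertainty. (Threshold characterization, Proposition 4 and Theorems 2 and 11.) -/

import Mathlib

open MeasureTheory

/-- The standard normal density `φ`. -/
noncomputable def stdNormalPDF (x : ℝ) : ℝ :=
  (Real.sqrt (2 * Real.pi))⁻¹ * Real.exp (-x ^ 2 / 2)

/-- The standard normal CDF `Φ`. -/
noncomputable def stdNormalCDF (x : ℝ) : ℝ :=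
  ∫ t in Set.Iic x, stdNormalPDF t

/-- The catalytic value `V(σ, Δ) = -Δ·Φ(-Δ/σ) + σ·φ(-Δ/σ)`. -/
noncomputable def catalyticValue (σ Δ : ℝ) : ℝ :=
  -Δ * stdNormalCDF (-Δ / σ) + σ * stdNormalPDF (-Δ / σ)

/-! The envelope identity `∂V/∂σ = φ(-Δ/σ) > 0` makes `σ ↦ V(σ, Δ)` strictly increasing and
continuous on `(0, ∞)`. Since `0 ≤ Φ ≤ 1` and `φ ≤ 1`, we have `V(σ, Δ) ≤ σ`, and for `σ ≥ Δ`
also `V(σ, Δ) ≥ σ φ(1) - Δ`; so `V` crosses every level `c > 0`, exactly once, by the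
intermediate value theorem. -/

theorem StrictMonoOn.exists_unique_threshold {α β : Type*} [LinearOrder α] [TopologicalSpace α]
    [LinearOrder β] [TopologicalSpace β] [OrderClosedTopology β] {f : α → β} {s : Set α} {a b : α} {c : β}
    (hs : IsPreconnected s) (hmono : StrictMonoOn f s) (hcont : ContinuousOn f s)
    (ha : a ∈ s) (hb : b ∈ s) (hfa : f a ≤ c) (hcb : c ≤ f b) :
    ∃ x ∈ s, f x = c ∧ (∀ y ∈ s, f y = c → y = x) ∧ ∀ y ∈ s, (c < f y ↔ x < y) := by
  obtain ⟨x, hx, rfl⟩ := hs.intermediate_value ha hb hcont ⟨hfa, hcb⟩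
  exact ⟨x, hx, rfl, fun y hy hyx => hmono.injOn hy hx hyx,
    fun y hy => hmono.lt_iff_lt hx hy⟩

theorem stdNormalPDF_eq_gaussianPDFReal (x : ℝ) :
    stdNormalPDF x = ProbabilityTheory.gaussianPDFReal 0 1 x := by
  simp [stdNormalPDF, ProbabilityTheory.gaussianPDFReal]

theorem stdNormalPDF_pos (x : ℝ) : 0 < stdNormalPDF x := by
  unfold stdNormalPDF; positivity

theorem integrable_stdNormalPDF : Integrable stdNormalPDF := by
  simpa only [← funext stdNormalPDF_eq_gaussianPDFReal]
    using ProbabilityTheory.integrable_gaussianPDFReal 0 1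

theorem integral_stdNormalPDF : ∫ x, stdNormalPDF x = 1 := by
  simpa only [← funext stdNormalPDF_eq_gaussianPDFReal]
    using ProbabilityTheory.integral_gaussianPDFReal_eq_one 0 one_ne_zero

theorem continuous_stdNormalPDF : Continuous stdNormalPDF := by
  unfold stdNormalPDF; fun_prop

theorem stdNormalPDF_le_of_sq_le {x y : ℝ} (h : x ^ 2 ≤ y ^ 2) :
    stdNormalPDF y ≤ stdNormalPDF x := by
  unfold stdNormalPDF; gcongr

theorem stdNormalPDF_le_one (x : ℝ) : stdNormalPDF x ≤ 1 := by
  have hexp : Real.exp (-x ^ 2 / 2) ≤ 1 := Real.exp_le_one_iff.2 (by nlinarith [sq_nonneg x])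
  have hsqrt : 1 ≤ Real.sqrt (2 * Real.pi) :=
    Real.one_le_sqrt.2 (by nlinarith [Real.pi_gt_three])
  calc stdNormalPDF x ≤ 1 * 1 := by
        unfold stdNormalPDF
        gcongr
        exact inv_le_one_of_one_le₀ hsqrt
    _ = 1 := one_mul 1

theorem hasDerivAt_stdNormalPDF (x : ℝ) :
    HasDerivAt stdNormalPDF (-x * stdNormalPDF x) x := by
  have hexponent : HasDerivAt (fun y : ℝ => -y ^ 2 / 2) (-x) x :=
    ((hasDerivAt_pow 2 x).neg.div_const 2).congr_deriv (by ring)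
  exact (hexponent.exp.const_mul _).congr_deriv (by unfold stdNormalPDF; ring)

theorem stdNormalCDF_nonneg (x : ℝ) : 0 ≤ stdNormalCDF x :=
  integral_nonneg fun t => (stdNormalPDF_pos t).le

theorem stdNormalCDF_le_one (x : ℝ) : stdNormalCDF x ≤ 1 :=
  integral_stdNormalPDF ▸ setIntegral_le_integral integrable_stdNormalPDF
    (Filter.Eventually.of_forall fun t => (stdNormalPDF_pos t).le)

theorem hasDerivAt_stdNormalCDF (x : ℝ) :
    HasDerivAt stdNormalCDF (stdNormalPDF x) x := by
  have hsplit : stdNormalCDF = fun y => stdNormalCDF 0 + ∫ t in (0 : ℝ)..y, stdNormalPDF t := by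
    funext y
    rw [← intervalIntegral.integral_Iic_sub_Iic integrable_stdNormalPDF.integrableOn
      integrable_stdNormalPDF.integrableOn]
    unfold stdNormalCDF; ring
  rw [hsplit]
  exact (intervalIntegral.integral_hasDerivAt_right integrable_stdNormalPDF.intervalIntegrable
    (continuous_stdNormalPDF.stronglyMeasurableAtFilter _ _)
    continuous_stdNormalPDF.continuousAt).const_add _

theorem hasDerivAt_catalyticValue (Δ : ℝ) {σ : ℝ} (hσ : 0 < σ) :
    HasDerivAt (fun s => catalyticValue s Δ) (stdNormalPDF (-Δ / σ)) σ := by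
  have hz : HasDerivAt (fun s : ℝ => -Δ / s) (Δ / σ ^ 2) σ := by
    simpa [div_eq_mul_inv] using (hasDerivAt_inv hσ.ne').const_mul (-Δ)
  have hV := ((hasDerivAt_stdNormalCDF _).comp σ hz).const_mul (-Δ)
    |>.add ((hasDerivAt_id σ).mul ((hasDerivAt_stdNormalPDF _).comp σ hz))
  refine hV.congr_deriv ?_
  -- the two `Δ² φ / σ²` terms cancel (the envelope property of `V`)
  simp only [Function.comp_apply, id]
  field_simp
  ring

theorem continuousOn_catalyticValue (Δ : ℝ) :
    ContinuousOn (fun σ => catalyticValue σ Δ) (Set.Ioi 0) :=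
  fun _ hσ => (hasDerivAt_catalyticValue Δ hσ).continuousAt.continuousWithinAt

theorem strictMonoOn_catalyticValue (Δ : ℝ) :
    StrictMonoOn (fun σ => catalyticValue σ Δ) (Set.Ioi 0) :=
  strictMonoOn_of_hasDerivWithinAt_pos (convex_Ioi 0)
    (continuousOn_catalyticValue Δ)
    (fun _ hσ => (hasDerivAt_catalyticValue Δ (interior_subset hσ)).hasDerivWithinAt)
    (fun _ _ => stdNormalPDF_pos _)

theorem catalyticValue_le {σ Δ : ℝ} (hσ : 0 ≤ σ) (hΔ : 0 ≤ Δ) : catalyticValue σ Δ ≤ σ := by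
  have hCDF := stdNormalCDF_nonneg (-Δ / σ)
  have hPDF := mul_le_mul_of_nonneg_left (stdNormalPDF_le_one (-Δ / σ)) hσ
  unfold catalyticValue
  nlinarith

theorem sub_le_catalyticValue {σ Δ : ℝ} (hΔ : 0 ≤ Δ) (hΔσ : Δ ≤ σ) :
    σ * stdNormalPDF 1 - Δ ≤ catalyticValue σ Δ := by
  have hσ : 0 ≤ σ := hΔ.trans hΔσ
  have hsq : (-Δ / σ) ^ 2 ≤ 1 ^ 2 := by
    rw [neg_div, neg_sq]
    exact pow_le_pow_left₀ (div_nonneg hΔ hσ) (div_le_one_of_le₀ hΔσ hσ) 2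
  have hCDF := stdNormalCDF_le_one (-Δ / σ)
  have hPDF := mul_le_mul_of_nonneg_left (stdNormalPDF_le_of_sq_le hsq) hσ
  unfold catalyticValue
  nlinarith

/-- Threshold characterization (Proposition 4, Theorems 2 and 11): for fixed `Δ > 0`
and cost `c > 0`, there is a unique `σ̄ > 0` with `V(σ̄, Δ) = c`, and for every
`σ > 0`, `V(σ, Δ) > c` iff `σ > σ̄`. -/
theorem exploration_threshold_rule (Δ c : ℝ) (hΔ : 0 < Δ) (hc : 0 < c) :
    ∃ σbar : ℝ, 0 < σbar ∧ catalyticValue σbar Δ = c ∧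
      (∀ σ' : ℝ, 0 < σ' → catalyticValue σ' Δ = c → σ' = σbar) ∧
      (∀ σ : ℝ, 0 < σ → (c < catalyticValue σ Δ ↔ σbar < σ)) := by
  set b := max Δ ((c + Δ) / stdNormalPDF 1)
  have hΔb : Δ ≤ b := le_max_left _ _
  have hVb : c ≤ catalyticValue b Δ := by
    have hcb : c + Δ ≤ b * stdNormalPDF 1 :=
      (div_le_iff₀ (stdNormalPDF_pos 1)).1 (le_max_right _ _)
    linarith [sub_le_catalyticValue hΔ.le hΔb]
  have hVa : catalyticValue (c / 2) Δ ≤ c := by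
    linarith [catalyticValue_le (half_pos hc).le hΔ.le]
  exact (strictMonoOn_catalyticValue Δ).exists_unique_threshold isPreconnected_Ioi
    (continuousOn_catalyticValue Δ) (half_pos hc) (hΔ.trans_le hΔb) hVa hVb
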